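/- arXiv:2512.08017 — 5 statements merged into one kernel-verified Lean document; each statement's English description precedes it below -/
import Mathlib

section
/- Let C be a τ-subspace-design additive code over alphabet Σ = F_q^s, H ⊆ C an affine space of dimension r, y ∈ Σ^n, and ε > 0. For c ∈ H with Δ(c, y) < 1 − τ(r) − ε, the weighted pruning algorithm PRUNE_{D_ε} outputs c with probability at least ε/(r + ε). Here at each step the algorithm samples coordinate i with probability proportional to w_i, where w_i = 0 if H_i = ∅ or H_i = H, and w_i = dim(H_i) + ε otherwise, with H_i = {h ∈ H : h_i = y_i}; it recurses on H_i until the dimension reaches 0, then outputs the unique element. -/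
open Module Classical

def SubspaceDesign {F : Type*} [Field F] {n s : ℕ}
    (C : Submodule F (Fin n → Fin s → F)) (τ : ℕ → ℝ) : Prop :=
  ∀ r : ℕ, 0 < r → ∀ A : Submodule F (Fin n → Fin s → F), A ≤ C →
    finrank F A ≤ r →
    (∑ i : Fin n, (finrank F ↥(A ⊓ LinearMap.ker (LinearMap.proj i)) : ℝ)) / n
      ≤ (finrank F ↥A : ℝ) * τ r

/-- The affine subspace `{x : x i = v}` of `Alph^n`. -/
noncomputable def coordAff {F Alph : Type*} [Field F] [AddCommGroup Alph] [Module F Alph]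
    {n : ℕ} (i : Fin n) (v : Alph) : AffineSubspace F (Fin n → Alph) :=
  AffineSubspace.comap ((LinearMap.proj i : (Fin n → Alph) →ₗ[F] Alph).toAffineMap)
    (AffineSubspace.mk' v ⊥)

/-- The weight `wᵢ` used by the weighted pruning algorithm: `wᵢ = 0` if
`Hᵢ = {h ∈ H : h i = y i}` is empty or equal to `H`, and `wᵢ = dim Hᵢ + ε` otherwise. -/
noncomputable def wWeight {F Alph : Type*} [Field F] [AddCommGroup Alph] [Module F Alph]
    {n : ℕ} (ε : ℝ) (y : Fin n → Alph) (H : AffineSubspace F (Fin n → Alph)) (i : Fin n) : ℝ :=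
  if H ⊓ coordAff (F := F) i (y i) = ⊥ ∨ H ⊓ coordAff (F := F) i (y i) = H then 0
  else (finrank F (H ⊓ coordAff (F := F) i (y i)).direction : ℝ) + ε

/-- Probability that the weighted pruning algorithm `PRUNE_{D_ε}`, run for at most `N` rounds
from the affine space `H`, outputs the codeword `c`: while `H ≠ {c}`, it samples a coordinate
`i` with probability proportional to `wᵢ` and recurses on `Hᵢ = {h ∈ H : h i = y i}`; once the
dimension reaches `0` it outputs the unique element. -/
noncomputable def wPrune {F Alph : Type*} [Field F] [AddCommGroup Alph] [Module F Alph]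
    {n : ℕ} (ε : ℝ) (y c : Fin n → Alph) :
    ℕ → AffineSubspace F (Fin n → Alph) → ℝ
  | 0, H => if (H : Set (Fin n → Alph)) = {c} then 1 else 0
  | N + 1, H =>
      if (H : Set (Fin n → Alph)) = {c} then 1
      else ∑ i : Fin n,
        (wWeight ε y H i / ∑ j : Fin n, wWeight ε y H j) *
          wPrune ε y c N (H ⊓ coordAff (F := F) i (y i))

section Basic
variable {F Alph : Type*} [Field F] [AddCommGroup Alph] [Module F Alph] {n : ℕ}
  {ε : ℝ} {y c : Fin n → Alph}

lemma mem_coordAff {i : Fin n} {v : Alph} {x : Fin n → Alph} :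
    x ∈ coordAff (F := F) i v ↔ x i = v := by
  simp [coordAff, AffineSubspace.mem_comap, AffineSubspace.mem_mk', sub_eq_zero]

lemma coordAff_eq_mk' (i : Fin n) (v : Alph) :
    coordAff (F := F) i v =
      AffineSubspace.mk' (Function.update (0 : Fin n → Alph) i v)
        (LinearMap.ker (LinearMap.proj i : (Fin n → Alph) →ₗ[F] Alph)) := by
  ext x
  rw [mem_coordAff, AffineSubspace.mem_mk']
  simp [sub_eq_zero]

lemma direction_coordAff (i : Fin n) (v : Alph) :
    (coordAff (F := F) i v).direction =
      LinearMap.ker (LinearMap.proj i : (Fin n → Alph) →ₗ[F] Alph) := by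
  rw [coordAff_eq_mk', AffineSubspace.direction_mk']

lemma wWeight_nonneg (hε : 0 ≤ ε) (H : AffineSubspace F (Fin n → Alph)) (i : Fin n) :
    0 ≤ wWeight ε y H i := by
  unfold wWeight
  split
  · exact le_refl 0
  · positivity

lemma wPrune_nonneg (hε : 0 ≤ ε) :
    ∀ (N : ℕ) (H : AffineSubspace F (Fin n → Alph)), 0 ≤ wPrune ε y c N H
  | 0, H => by rw [wPrune]; split <;> norm_num
  | N + 1, H => by
      rw [wPrune]; split
      · norm_num
      · refine Finset.sum_nonneg fun i _ => mul_nonneg ?_ (wPrune_nonneg hε N _)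
        exact div_nonneg (wWeight_nonneg hε H i) (Finset.sum_nonneg fun j _ => wWeight_nonneg hε H j)

lemma wPrune_le_one (hε : 0 ≤ ε) :
    ∀ (N : ℕ) (H : AffineSubspace F (Fin n → Alph)), wPrune ε y c N H ≤ 1
  | 0, H => by rw [wPrune]; split <;> norm_num
  | N + 1, H => by
      rw [wPrune]; split
      · norm_num
      · set W := ∑ j : Fin n, wWeight ε y H j with hW
        calc (∑ i : Fin n, (wWeight ε y H i / W) * wPrune ε y c N (H ⊓ coordAff (F := F) i (y i)))
            ≤ ∑ i : Fin n, (wWeight ε y H i / W) * 1 := by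
              refine Finset.sum_le_sum fun i _ => ?_
              exact mul_le_mul_of_nonneg_left (wPrune_le_one hε N _)
                (div_nonneg (wWeight_nonneg hε H i)
                  (Finset.sum_nonneg fun j _ => wWeight_nonneg hε H j))
          _ = W / W := by simp only [mul_one]; rw [← Finset.sum_div]
          _ ≤ 1 := by
              rcases eq_or_ne W 0 with h | h
              · simp [h]
              · rw [div_self h]

lemma wPrune_succ_le (hε : 0 ≤ ε) :
    ∀ (N : ℕ) (H : AffineSubspace F (Fin n → Alph)),
      wPrune ε y c N H ≤ wPrune ε y c (N + 1) H
  | 0, H => by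
      rw [wPrune, wPrune]; split
      · norm_num
      · exact Finset.sum_nonneg fun i _ => mul_nonneg
          (div_nonneg (wWeight_nonneg hε H i)
            (Finset.sum_nonneg fun j _ => wWeight_nonneg hε H j))
          (wPrune_nonneg hε 0 _)
  | N + 1, H => by
      rw [wPrune, wPrune]; split
      · exact le_refl 1
      · refine Finset.sum_le_sum fun i _ => ?_
        exact mul_le_mul_of_nonneg_left (wPrune_succ_le hε N _)
          (div_nonneg (wWeight_nonneg hε H i)
            (Finset.sum_nonneg fun j _ => wWeight_nonneg hε H j))

lemma wPrune_mono (hε : 0 ≤ ε) (H : AffineSubspace F (Fin n → Alph)) :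
    Monotone (fun N => wPrune ε y c N H) :=
  monotone_nat_of_le_succ fun N => wPrune_succ_le hε N H

end Basic

private lemma key_arith {nn NN t ε W g n0 : ℝ} (hnn : 0 < nn) (hε : 0 < ε) (ht : 0 ≤ t)
    (hNN : 0 ≤ NN)
    (hW : W ≤ nn * ((NN + 1) * t) - (NN + 1) * n0 + ε * (nn - n0))
    (hg : nn * t + nn * ε - n0 < g) :
    W < g * ((NN + 1) + ε) := by
  nlinarith [mul_lt_mul_of_pos_right hg (by positivity : (0:ℝ) < (NN + 1) + ε),
    mul_nonneg (mul_nonneg hnn.le hε.le) ht, mul_pos (mul_pos hnn hε) hε]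

set_option maxHeartbeats 1000000 in
lemma key_lemma {F : Type*} [Field F] {n s : ℕ} (hn : 0 < n)
    (C : Submodule F (Fin n → Fin s → F)) (τ : ℕ → ℝ) (hC : SubspaceDesign C τ)
    (hmono : Monotone τ) (ε : ℝ) (hε : 0 < ε) (y c : Fin n → Fin s → F) :
    ∀ R : ℕ, ∀ H : AffineSubspace F (Fin n → Fin s → F),
      (H : Set (Fin n → Fin s → F)) ⊆ (C : Set (Fin n → Fin s → F)) →
      finrank F H.direction = R → c ∈ H →
      ((Finset.univ.filter fun i => c i ≠ y i).card : ℝ) / n < 1 - τ R - ε →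
      ε / (R + ε) ≤ wPrune ε y c R H := by
  intro R
  induction R using Nat.strong_induction_on with
  | _ R IH =>
    intro H hHC hrk hc hΔ
    match R, hrk, hΔ, IH with
    | 0, hrk, hΔ, IH =>
      have hdir : H.direction = ⊥ := Submodule.finrank_eq_zero.mp hrk
      have hset : (H : Set (Fin n → Fin s → F)) = {c} := by
        ext x
        simp only [Set.mem_singleton_iff, SetLike.mem_coe]
        constructor
        · intro hx
          have := AffineSubspace.vsub_mem_direction hx hc
          rw [hdir, Submodule.mem_bot, vsub_eq_sub, sub_eq_zero] at this
          exact this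
        · rintro rfl; exact hc
      rw [wPrune, if_pos hset]
      rw [Nat.cast_zero, zero_add, div_self hε.ne']
    | N + 1, hrk, hΔ, IH =>
      rw [wPrune]
      by_cases hsing : (H : Set (Fin n → Fin s → F)) = {c}
      · rw [if_pos hsing]
        rw [div_le_one (by positivity)]
        nlinarith [Nat.cast_nonneg (α := ℝ) (N + 1)]
      rw [if_neg hsing]
      -- setup
      set A := H.direction with hA
      set d : Fin n → ℕ := fun i => finrank F ↥(A ⊓ LinearMap.ker (LinearMap.proj i)) with hd
      set Hi : Fin n → AffineSubspace F (Fin n → Fin s → F) :=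
        fun i => H ⊓ coordAff (F := F) i (y i) with hHi
      have hAC : A ≤ C := by
        intro v hv
        obtain ⟨p1, hp1, p2, hp2, rfl⟩ :=
          (AffineSubspace.mem_direction_iff_eq_vsub ⟨c, hc⟩ v).mp hv
        rw [vsub_eq_sub]
        exact C.sub_mem (hHC hp1) (hHC hp2)
      have hdesign := hC (N + 1) (Nat.succ_pos N) A hAC (le_of_eq hrk)
      rw [hrk] at hdesign
      have hn' : (0:ℝ) < n := by exact_mod_cast hn
      have hsum_all : (∑ i : Fin n, (d i : ℝ)) ≤ n * ((N + 1 : ℕ) * τ (N + 1)) := by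
        rw [div_le_iff₀ hn'] at hdesign
        calc (∑ i : Fin n, (d i : ℝ)) ≤ (N + 1 : ℕ) * τ (N+1) * n := hdesign
          _ = n * ((N + 1 : ℕ) * τ (N + 1)) := by ring
      have hτ0 : 0 ≤ τ (N + 1) := by
        have h1 : (0:ℝ) ≤ (∑ i : Fin n,
            (finrank F ↥(A ⊓ LinearMap.ker (LinearMap.proj i)) : ℝ)) / n := by positivity
        have h2 : (0:ℝ) < ((N + 1 : ℕ) : ℝ) := by positivity
        have h3 := le_trans h1 hdesign
        by_contra hneg
        push_neg at hneg
        nlinarith [mul_pos h2 (by linarith : (0:ℝ) < -τ (N+1))]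
      -- direction of Hi
      have hdirHi : ∀ i : Fin n, Hi i ≠ ⊥ →
          (Hi i).direction = A ⊓ LinearMap.ker (LinearMap.proj i) := by
        intro i hne
        obtain ⟨p, hp⟩ := (AffineSubspace.nonempty_iff_ne_bot (Hi i)).mpr hne
        have hp' := hp
        simp only [hHi, SetLike.mem_coe] at hp'
        rw [AffineSubspace.mem_inf_iff] at hp'
        simp only [hHi]
        rw [AffineSubspace.direction_inf_of_mem hp'.1 hp'.2, direction_coordAff]
      -- Finsets
      set G : Finset (Fin n) := Finset.univ.filter (fun i => c i = y i ∧ Hi i ≠ H) with hG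
      set SH : Finset (Fin n) := Finset.univ.filter (fun i => Hi i = H) with hSH
      set Act : Finset (Fin n) := Finset.univ.filter (fun i => Hi i ≠ ⊥ ∧ Hi i ≠ H) with hAct
      set good : Finset (Fin n) := Finset.univ.filter (fun i => c i = y i) with hgood
      set bad : Finset (Fin n) := Finset.univ.filter (fun i => c i ≠ y i) with hbad
      -- SH facts
      have hSH_d : ∀ i ∈ SH, d i = N + 1 := by
        intro i hi
        rw [hSH, Finset.mem_filter] at hi
        have hle : A ≤ LinearMap.ker (LinearMap.proj i) := by
          intro v hv
          obtain ⟨p1, hp1, p2, hp2, rfl⟩ :=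
            (AffineSubspace.mem_direction_iff_eq_vsub ⟨c, hc⟩ v).mp hv
          have e1 : p1 i = y i := by
            have h' : p1 ∈ Hi i := hi.2.symm ▸ hp1
            simp only [hHi] at h'
            exact mem_coordAff.mp ((AffineSubspace.mem_inf_iff _ _ _).mp h').2
          have e2 : p2 i = y i := by
            have h' : p2 ∈ Hi i := hi.2.symm ▸ hp2
            simp only [hHi] at h'
            exact mem_coordAff.mp ((AffineSubspace.mem_inf_iff _ _ _).mp h').2
          rw [vsub_eq_sub, LinearMap.mem_ker]
          show p1 i - p2 i = 0
          rw [e1, e2, sub_self]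
        rw [hd]
        simp only
        rw [inf_eq_left.mpr hle, hrk]
      -- membership of c in Hi
      have hc_mem_Hi : ∀ i : Fin n, c i = y i → c ∈ Hi i := by
        intro i hci
        simp only [hHi]
        rw [AffineSubspace.mem_inf_iff]
        exact ⟨hc, mem_coordAff.mpr hci⟩
      have hG_sub_Act : G ⊆ Act := by
        intro i hi
        rw [hG, Finset.mem_filter] at hi
        rw [hAct, Finset.mem_filter]
        refine ⟨Finset.mem_univ i, ?_, hi.2.2⟩
        rw [← AffineSubspace.nonempty_iff_ne_bot]
        exact ⟨c, hc_mem_Hi i hi.2.1⟩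
      -- weights
      have hw_act : ∀ i ∈ Act, wWeight ε y H i = (d i : ℝ) + ε := by
        intro i hi
        rw [hAct, Finset.mem_filter] at hi
        rw [wWeight, if_neg (by push_neg; exact hi.2)]
        have := hdirHi i hi.2.1
        simp only [hHi] at this
        rw [this]
      have hw_zero : ∀ i ∉ Act, wWeight ε y H i = 0 := by
        intro i hi
        rw [hAct, Finset.mem_filter] at hi
        push_neg at hi
        rw [wWeight, if_pos]
        by_cases h1 : Hi i = ⊥
        · exact Or.inl h1
        · exact Or.inr (hi (Finset.mem_univ i) h1)
      set W : ℝ := ∑ j : Fin n, wWeight ε y H j with hW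
      have hW_eq : W = ∑ i ∈ Act, ((d i : ℝ) + ε) := by
        rw [hW, ← Finset.sum_subset (Finset.subset_univ Act) (fun i _ hi => hw_zero i hi)]
        exact Finset.sum_congr rfl hw_act
      -- cardinality and sum bounds
      have hdisj : Disjoint Act SH := by
        rw [Finset.disjoint_left]
        intro i hi hi2
        rw [hAct, Finset.mem_filter] at hi
        rw [hSH, Finset.mem_filter] at hi2
        exact hi.2.2 hi2.2
      have hW0 : 0 ≤ W := Finset.sum_nonneg fun j _ => wWeight_nonneg hε.le H j
      clear_value G SH Act good bad W
      -- sum split over SH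
      have hSHsum : ∑ i ∈ SH, (d i : ℝ) = ((N+1 : ℕ) : ℝ) * SH.card := by
        calc ∑ i ∈ SH, (d i : ℝ) = ∑ _i ∈ SH, ((N+1:ℕ):ℝ) :=
              Finset.sum_congr rfl (fun i hi => by rw [hSH_d i hi])
          _ = SH.card * ((N+1:ℕ):ℝ) := by rw [Finset.sum_const, nsmul_eq_mul]
          _ = ((N+1:ℕ):ℝ) * SH.card := by ring
      have hsum_split : (∑ i ∈ Act, (d i : ℝ)) + ((N+1:ℕ):ℝ) * SH.card
          ≤ ∑ i : Fin n, (d i : ℝ) := by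
        rw [← hSHsum, ← Finset.sum_union hdisj]
        exact Finset.sum_le_sum_of_subset_of_nonneg (Finset.subset_univ _)
          (fun i _ _ => by positivity)
      have hcard_union : Act.card + SH.card ≤ n := by
        have h1 : (Act ∪ SH).card ≤ n := by
          simpa using Finset.card_le_univ (Act ∪ SH)
        rwa [Finset.card_union_of_disjoint hdisj] at h1
      have hSH_good : SH ⊆ good := by
        intro i hi
        rw [hSH, Finset.mem_filter] at hi
        rw [hgood, Finset.mem_filter]
        refine ⟨Finset.mem_univ i, ?_⟩
        have hcHi : c ∈ Hi i := hi.2.symm ▸ hc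
        simp only [hHi] at hcHi
        exact mem_coordAff.mp ((AffineSubspace.mem_inf_iff _ _ _).mp hcHi).2
      have hunion : G ∪ SH = good := by
        ext i
        rw [Finset.mem_union, hG, hSH, hgood, Finset.mem_filter, Finset.mem_filter,
          Finset.mem_filter]
        constructor
        · rintro (⟨_, h, _⟩ | ⟨_, h⟩)
          · exact ⟨Finset.mem_univ i, h⟩
          · refine ⟨Finset.mem_univ i, ?_⟩
            have hcHi : c ∈ Hi i := h.symm ▸ hc
            simp only [hHi] at hcHi
            exact mem_coordAff.mp ((AffineSubspace.mem_inf_iff _ _ _).mp hcHi).2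
        · rintro ⟨_, h⟩
          by_cases hH : Hi i = H
          · exact Or.inr ⟨Finset.mem_univ i, hH⟩
          · exact Or.inl ⟨Finset.mem_univ i, h, hH⟩
      have hdisjG : Disjoint G SH := by
        rw [Finset.disjoint_left]
        intro i hi hi2
        rw [hG, Finset.mem_filter] at hi
        rw [hSH, Finset.mem_filter] at hi2
        exact hi.2.2 hi2.2
      have hcard_good : good.card = G.card + SH.card := by
        rw [← hunion, Finset.card_union_of_disjoint hdisjG]
      have hcard_gb : good.card + bad.card = n := by
        have := Finset.card_filter_add_card_filter_not
          (s := (Finset.univ : Finset (Fin n))) (p := fun i => c i = y i)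
        simpa [hgood, hbad] using this
      have hbad_lt : (bad.card : ℝ) < n * (1 - τ (N+1) - ε) := by
        rw [div_lt_iff₀ hn'] at hΔ
        calc (bad.card : ℝ) < (1 - τ (N+1) - ε) * n := hΔ
          _ = n * (1 - τ (N+1) - ε) := by ring
      -- bound on W
      have hW_le : W ≤ (n : ℝ) * (((N+1:ℕ):ℝ) * τ (N+1)) - ((N+1:ℕ):ℝ) * SH.card
          + ε * ((n : ℝ) - SH.card) := by
        have e1 : W = (∑ i ∈ Act, (d i : ℝ)) + ε * Act.card := by
          rw [hW_eq, Finset.sum_add_distrib, Finset.sum_const, nsmul_eq_mul]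
          ring
        have e2 : (Act.card : ℝ) ≤ (n : ℝ) - SH.card := by
          have : (Act.card : ℝ) + SH.card ≤ n := by exact_mod_cast hcard_union
          linarith
        have e3 : (∑ i ∈ Act, (d i : ℝ))
            ≤ (n : ℝ) * (((N+1:ℕ):ℝ) * τ (N+1)) - ((N+1:ℕ):ℝ) * SH.card := by
          linarith [hsum_split, hsum_all]
        rw [e1]
        have := mul_le_mul_of_nonneg_left e2 hε.le
        linarith
      -- key strict inequality
      have hWg : W < (G.card : ℝ) * (((N:ℝ)+1) + ε) := by
        have hgd : (good.card : ℝ) = (G.card : ℝ) + SH.card := by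
          rw [hcard_good]; push_cast; ring
        have hgb : (good.card : ℝ) + bad.card = n := by
          exact_mod_cast hcard_gb
        have hg_gt : (n:ℝ) * τ (N+1) + n * ε - SH.card < (G.card : ℝ) := by linarith
        have hcast : ((N+1:ℕ):ℝ) = (N:ℝ) + 1 := by push_cast; ring
        rw [hcast] at hW_le
        exact key_arith hn' hε hτ0 (Nat.cast_nonneg N) hW_le hg_gt
      have hgpos : 0 < (G.card : ℝ) := by
        by_contra h
        push_neg at h
        have h0 : (G.card : ℝ) = 0 := le_antisymm h (Nat.cast_nonneg _)
        rw [h0, zero_mul] at hWg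
        linarith
      have hWpos : 0 < W := by
        have h1 : ∑ i ∈ G, ((d i : ℝ) + ε) ≤ W := by
          rw [hW_eq]
          exact Finset.sum_le_sum_of_subset_of_nonneg hG_sub_Act (fun i _ _ => by positivity)
        have h2 : (G.card : ℝ) * ε ≤ ∑ i ∈ G, ((d i : ℝ) + ε) := by
          calc (G.card : ℝ) * ε = ∑ _i ∈ G, ε := by rw [Finset.sum_const, nsmul_eq_mul]
            _ ≤ _ := Finset.sum_le_sum fun i _ => le_add_of_nonneg_left (by positivity)
        have := mul_pos hgpos hε
        linarith
      have hWne : W ≠ 0 := hWpos.ne'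
      -- per-term bound on G
      have hterm : ∀ i ∈ G, ε / W ≤ (wWeight ε y H i / W) *
          wPrune ε y c N (H ⊓ coordAff (F := F) i (y i)) := by
        intro i hiG
        have hiAct := hG_sub_Act hiG
        rw [hG, Finset.mem_filter] at hiG
        have hci : c i = y i := hiG.2.1
        have hcHi : c ∈ Hi i := hc_mem_Hi i hci
        have hne : Hi i ≠ ⊥ := by
          rw [← AffineSubspace.nonempty_iff_ne_bot]
          exact ⟨c, hcHi⟩
        have hdir := hdirHi i hne
        have hlt : (Hi i).direction < A := by
          rw [hdir]
          refine lt_of_le_of_ne inf_le_left ?_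
          intro heq
          apply hiG.2.2
          refine AffineSubspace.ext_of_direction_eq ?_ ⟨c, hcHi, hc⟩
          rw [hdir, heq]
        have hd_eq : finrank F ↥((Hi i).direction) = d i := by rw [hdir]
        have hdlt : d i < N + 1 := by
          rw [← hrk, ← hd_eq]
          exact Submodule.finrank_lt_finrank_of_lt hlt
        have hΔ' : ((bad.card : ℝ)) / n < 1 - τ (d i) - ε := by
          have := hmono (le_of_lt hdlt : d i ≤ N + 1)
          calc ((bad.card : ℝ)) / n < 1 - τ (N+1) - ε := hΔ
            _ ≤ 1 - τ (d i) - ε := by linarith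
        have hsubC : ((Hi i : AffineSubspace F (Fin n → Fin s → F)) : Set (Fin n → Fin s → F))
            ⊆ (C : Set (Fin n → Fin s → F)) := by
          intro x hx
          apply hHC
          have hx' : x ∈ Hi i := hx
          simp only [hHi] at hx'
          exact ((AffineSubspace.mem_inf_iff _ _ _).mp hx').1
        have hIH := IH (d i) hdlt (Hi i) hsubC hd_eq hcHi hΔ'
        have hmonoP : wPrune ε y c (d i) (Hi i) ≤ wPrune ε y c N (Hi i) :=
          wPrune_mono hε.le (Hi i) (Nat.lt_succ_iff.mp hdlt)
        have hp : ε / ((d i : ℝ) + ε) ≤ wPrune ε y c N (Hi i) := le_trans hIH hmonoP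
        have hw : wWeight ε y H i = (d i : ℝ) + ε := hw_act i hiAct
        have hane : ((d i : ℝ) + ε) ≠ 0 := by positivity
        have hkey : (((d i : ℝ) + ε) / W) * (ε / ((d i : ℝ) + ε)) = ε / W := by
          field_simp
        rw [hw]
        calc ε / W = (((d i : ℝ) + ε) / W) * (ε / ((d i : ℝ) + ε)) := hkey.symm
          _ ≤ (((d i : ℝ) + ε) / W) * wPrune ε y c N (H ⊓ coordAff (F := F) i (y i)) := by
              refine mul_le_mul_of_nonneg_left ?_ (by positivity)
              exact hp
      -- finish
      have hA' : ε / (((N+1:ℕ):ℝ) + ε) ≤ (G.card : ℝ) * (ε / W) := by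
        rw [← mul_div_assoc]
        rw [div_le_div_iff₀ (by positivity) hWpos]
        have hcast : ((N+1:ℕ):ℝ) = (N:ℝ) + 1 := by push_cast; ring
        rw [hcast]
        have := mul_le_mul_of_nonneg_left hWg.le hε.le
        linarith
      calc ε / (((N+1:ℕ):ℝ) + ε) ≤ (G.card : ℝ) * (ε / W) := hA'
        _ = ∑ _i ∈ G, ε / W := by rw [Finset.sum_const, nsmul_eq_mul]
        _ ≤ ∑ i ∈ G, (wWeight ε y H i / W) *
              wPrune ε y c N (H ⊓ coordAff (F := F) i (y i)) := Finset.sum_le_sum hterm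
        _ ≤ ∑ i : Fin n, (wWeight ε y H i / W) *
              wPrune ε y c N (H ⊓ coordAff (F := F) i (y i)) :=
            Finset.sum_le_sum_of_subset_of_nonneg (Finset.subset_univ G)
              (fun i _ _ => mul_nonneg (div_nonneg (wWeight_nonneg hε.le H i) hW0)
                (wPrune_nonneg hε.le N _))


/-- Let `C` be a `τ`-subspace-design additive code over `Σ = F^s` (with `τ` non-decreasing,
WLOG), `H ⊆ C` an affine space of dimension `r`, `y ∈ Σ^n` and `ε > 0`. For `c ∈ H` with
`Δ(c, y) < 1 − τ(r) − ε`, the weighted pruning algorithm `PRUNE_{D_ε}` outputs `c` with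
probability at least `ε/(r + ε)`. -/
theorem stmt4 {F : Type*} [Field F] {n s : ℕ} (hn : 0 < n)
    (C : Submodule F (Fin n → Fin s → F)) (τ : ℕ → ℝ)
    (hC : SubspaceDesign C τ) (hmono : Monotone τ)
    (H : AffineSubspace F (Fin n → Fin s → F))
    (hHC : (H : Set (Fin n → Fin s → F)) ⊆ (C : Set (Fin n → Fin s → F)))
    (r : ℕ) (hr : finrank F H.direction = r)
    (ε : ℝ) (hε : 0 < ε)
    (y c : Fin n → Fin s → F) (hc : c ∈ H)
    (hΔ : ((Finset.univ.filter fun i => c i ≠ y i).card : ℝ) / n < 1 - τ r - ε) :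
    ε / (r + ε) ≤ ⨆ N : ℕ, wPrune ε y c N H := by
  have hkey := key_lemma hn C τ hC hmono ε hε y c r H hHC hr hc hΔ
  refine le_ciSup_of_le ?_ r hkey
  refine ⟨1, ?_⟩
  rintro x ⟨N, rfl⟩
  exact wPrune_le_one hε.le N H
end

section
/- Let r ≥ 1 and η' ∈ (0, 1) with rη' ≥ 1. If a sequence of real numbers starts at r, each term is at most (1−η') times the previous term and also at most the previous term minus 1, and the sequence ends at 0, then the number of steps is at most ⌈(1/η')(1 + ln(rη'))⌉. -/
/-- Potential function for the dimension-reduction argument. -/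
noncomputable def phiAux (η' x : ℝ) : ℝ :=
  if x ≤ 1 / η' then x else (1 / η') * (1 + Real.log (x * η'))

lemma phiAux_mono {η' : ℝ} (hη' : 0 < η') {x y : ℝ} (hxy : x ≤ y) :
    phiAux η' x ≤ phiAux η' y := by
  unfold phiAux
  split_ifs with hx hy hy
  · exact hxy
  · push_neg at hy
    have hyp : 1 < y * η' := (div_lt_iff₀ hη').mp hy
    have hlog : 0 ≤ Real.log (y * η') := Real.log_nonneg hyp.le
    nlinarith [mul_nonneg (le_of_lt (show (0:ℝ) < 1/η' by positivity)) hlog]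
  · linarith
  · push_neg at hx hy
    have h1 : 1 / η' < x := hx
    have hx0 : 0 < x := lt_trans (by positivity) h1
    have hlg : Real.log (x * η') ≤ Real.log (y * η') :=
      Real.log_le_log (by positivity) (by nlinarith)
    have hpr : 0 ≤ (1/η') * (Real.log (y * η') - Real.log (x * η')) :=
      mul_nonneg (by positivity) (by linarith)
    nlinarith [hpr]

lemma phiAux_step {η' x y : ℝ} (hη' : 0 < η') (hη'1 : η' < 1)
    (h1 : y ≤ (1 - η') * x) (h2 : y ≤ x - 1) :
    phiAux η' y ≤ phiAux η' x - 1 := by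
  by_cases hx : x ≤ 1 / η'
  · -- unit-decrement regime
    have := phiAux_mono hη' h2
    have hx1 : phiAux η' (x - 1) = x - 1 := by
      unfold phiAux; rw [if_pos (by linarith)]
    have hxx : phiAux η' x = x := by unfold phiAux; rw [if_pos hx]
    linarith [this, hx1.le, hxx.ge]
  · push_neg at hx
    have hx0 : 0 < x := lt_trans (by positivity) hx
    have hu1 : 1 < x * η' := by rw [div_lt_iff₀ hη'] at hx; linarith
    have hxx : phiAux η' x = (1 / η') * (1 + Real.log (x * η')) := by
      unfold phiAux; rw [if_neg (not_le.mpr hx)]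
    have hmono := phiAux_mono hη' h1
    by_cases hc : (1 - η') * x ≤ 1 / η'
    · -- lands in linear regime
      have hxy : phiAux η' ((1 - η') * x) = (1 - η') * x := by
        unfold phiAux; rw [if_pos hc]
      -- key: (1-η')(u-1) ≤ log u for u = x*η' ≤ 1/(1-η')
      set u := x * η' with hu
      have hu0 : 0 < u := by positivity
      have hlog : Real.log (1 / u) ≤ 1 / u - 1 :=
        Real.log_le_sub_one_of_pos (by positivity)
      have hlogu : (u - 1) / u ≤ Real.log u := by
        rw [Real.log_div one_ne_zero (ne_of_gt hu0), Real.log_one] at hlog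
        have : 1 - 1/u ≤ Real.log u := by linarith
        calc (u - 1) / u = 1 - 1/u := by field_simp
        _ ≤ Real.log u := this
      have huc : (1 - η') * u ≤ 1 := by
        have h5 := mul_le_mul_of_nonneg_right hc hη'.le
        have h6 : 1/η' * η' = 1 := by field_simp
        rw [h6] at h5
        calc (1 - η') * u = (1 - η') * x * η' := by rw [hu]; ring
        _ ≤ 1 := h5
      have hkey : (1 - η') * (u - 1) ≤ Real.log u := by
        have h3 : (1 - η') * (u - 1) ≤ (u - 1) / u := by
          have h7 : 1 - η' ≤ 1/u := by rw [le_div_iff₀ hu0]; linarith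
          calc (1 - η') * (u - 1) ≤ (1/u) * (u - 1) :=
            mul_le_mul_of_nonneg_right h7 (by linarith)
          _ = (u - 1) / u := by ring
        linarith
      -- conclude
      have : (1 - η') * x ≤ (1 / η') * (1 + Real.log u) - 1 := by
        have hη'ne : η' ≠ 0 := ne_of_gt hη'
        rw [← sub_nonneg]
        have : 0 ≤ (1/η') * (Real.log u - (1 - η') * (u - 1)) := by
          apply mul_nonneg (by positivity); linarith
        have hexp : (1/η') * (1 + Real.log u) - 1 - (1 - η') * x
            = (1/η') * (Real.log u - (1 - η') * (u - 1)) := by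
          field_simp [hu]; ring
        linarith [hexp ▸ this]
      linarith [hmono, hxy.le, hxx.ge]
    · -- stays in logarithmic regime
      push_neg at hc
      have hxy : phiAux η' ((1 - η') * x)
          = (1 / η') * (1 + Real.log ((1 - η') * x * η')) := by
        unfold phiAux; rw [if_neg (not_le.mpr hc)]
      have hlog1 : Real.log (1 - η') ≤ -η' := by
        have := Real.log_le_sub_one_of_pos (by linarith : (0:ℝ) < 1 - η')
        linarith
      have hsplit : Real.log ((1 - η') * x * η')
          = Real.log (1 - η') + Real.log (x * η') := by
        rw [mul_assoc, Real.log_mul (by linarith) (by positivity)]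
      have : (1 / η') * (1 + Real.log ((1 - η') * x * η'))
          ≤ (1 / η') * (1 + Real.log (x * η')) - 1 := by
        rw [hsplit]
        have h4 : (1/η') * Real.log (1 - η') ≤ -1 := by
          rw [← sub_nonneg]
          have : 0 ≤ (1/η') * (-η' - Real.log (1 - η')) := by
            apply mul_nonneg (by positivity); linarith
          have he : -1 - (1/η') * Real.log (1 - η')
              = (1/η') * (-η' - Real.log (1 - η')) := by
            field_simp
          linarith [he ▸ this]
        nlinarith [h4]
      linarith [hmono, hxy.le, hxx.ge, this]

/-- Dimension-reduction step count: let `r ≥ 1` and `η' ∈ (0,1)` with `rη' ≥ 1`. If a sequence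
of reals starts at `r`, each term is at most `(1−η')` times the previous term and at most the
previous term minus `1`, and the sequence ends at `0` after `k` steps, then
`k ≤ ⌈(1/η')(1 + ln(rη'))⌉`. -/
theorem stmt9 (r η' : ℝ) (hr : 1 ≤ r) (hη' : 0 < η') (hη'1 : η' < 1) (hrη' : 1 ≤ r * η')
    (a : ℕ → ℝ) (k : ℕ) (ha0 : a 0 = r) (hak : a k = 0)
    (hstep : ∀ j < k, a (j + 1) ≤ (1 - η') * a j ∧ a (j + 1) ≤ a j - 1) :
    k ≤ ⌈(1 / η') * (1 + Real.log (r * η'))⌉₊ := by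
  -- Φ(a j) ≤ Φ(r) - j for all j ≤ k
  have key : ∀ j ≤ k, phiAux η' (a j) + j ≤ phiAux η' r := by
    intro j hj
    induction j with
    | zero => simp [ha0]
    | succ n ih =>
      have hn : n < k := Nat.lt_of_succ_le hj
      have ihn := ih (Nat.le_of_lt hn)
      have ⟨h1, h2⟩ := hstep n hn
      have := phiAux_step hη' hη'1 h1 h2
      push_cast
      linarith
  have hend := key k le_rfl
  rw [hak] at hend
  have hphi0 : phiAux η' (0:ℝ) = 0 := by
    unfold phiAux; rw [if_pos (by positivity)]
  have hphir : phiAux η' r ≤ (1 / η') * (1 + Real.log (r * η')) := by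
    unfold phiAux
    split_ifs with h
    · have hlog : 0 ≤ Real.log (r * η') := Real.log_nonneg hrη'
      have : r ≤ 1/η' := h
      nlinarith [mul_nonneg (le_of_lt (show (0:ℝ) < 1/η' by positivity)) hlog]
    · exact le_rfl
  have hk : (k:ℝ) ≤ (1 / η') * (1 + Real.log (r * η')) := by
    rw [hphi0] at hend; linarith
  calc k = ⌈((k:ℕ):ℝ)⌉₊ := (Nat.ceil_natCast k).symm
  _ ≤ ⌈(1 / η') * (1 + Real.log (r * η'))⌉₊ := Nat.ceil_mono hk
end

section
/- Let H ⊆ (F_q^s)^n be an r-dimensional F_q-linear space and T = {t_1,…,t_m} ⊆ [n] with m ≤ r such that the only c ∈ H vanishing on all coordinates of T is 0. Then for all subsets L_{t_1},…,L_{t_m} ⊆ F_q^s of size ℓ each, there exist sets A_{t_1},…,A_{t_m} ⊆ H with |A_{t_i}| ≤ ℓ such that {c ∈ H : c_t ∈ L_t for all t ∈ T} ⊆ A_{t_1} + A_{t_2} + ⋯ + A_{t_m}, where the sumset is {a_1 + ⋯ + a_m : a_i ∈ A_{t_i}}. -/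
open Module

/-- Sum-set structure from complete agreement: if `H ⊆ (F^s)^n` is an `r`-dimensional linear
space and `T = {t₁,…,t_m} ⊆ [n]` (with `m ≤ r`) is such that the only `c ∈ H` vanishing on all
coordinates of `T` is `0`, then for any lists `L_{t₁},…,L_{t_m} ⊆ F^s` of size `ℓ` there exist
sets `A_{t₁},…,A_{t_m} ⊆ H` of size at most `ℓ` with
`{c ∈ H : c_t ∈ L_t ∀ t ∈ T} ⊆ A_{t₁} + ⋯ + A_{t_m}`. -/
theorem stmt10 {F : Type*} [Field F] [DecidableEq F] {n s m r ℓ : ℕ}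
    (H : Submodule F (Fin n → Fin s → F)) (hr : finrank F H = r) (hm : m ≤ r)
    (t : Fin m → Fin n) (ht : Function.Injective t)
    (hT : ∀ c ∈ H, (∀ i : Fin m, c (t i) = 0) → c = 0)
    (L : Fin m → Finset (Fin s → F)) (hL : ∀ i, (L i).card = ℓ) :
    ∃ A : Fin m → Finset (Fin n → Fin s → F),
      (∀ i, (A i : Set (Fin n → Fin s → F)) ⊆ (H : Set (Fin n → Fin s → F))) ∧
      (∀ i, (A i).card ≤ ℓ) ∧
      ∀ c ∈ H, (∀ i : Fin m, c (t i) ∈ L i) →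
        ∃ a : Fin m → (Fin n → Fin s → F), (∀ i, a i ∈ A i) ∧ c = ∑ i, a i := by
  classical
  -- the coordinate functionals on H
  set f : Fin m × Fin s → Module.Dual F H := fun p =>
    (LinearMap.proj p.2).comp ((LinearMap.proj (t p.1)).comp H.subtype) with hf
  have hfapply : ∀ p (c : H), f p c = (c : Fin n → Fin s → F) (t p.1) p.2 := fun p c => rfl
  -- they span the dual of H
  have hspan : Submodule.span F (Set.range f) = ⊤ := by
    set W := Submodule.span F (Set.range f) with hW
    have hco : W.dualCoannihilator = ⊥ := by
      rw [eq_bot_iff]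
      intro c hc
      rw [Submodule.mem_dualCoannihilator] at hc
      have : (c : Fin n → Fin s → F) = 0 := by
        apply hT c c.2
        intro i
        funext k
        have := hc (f (i, k)) (Submodule.subset_span (Set.mem_range_self (i, k)))
        simpa [hfapply] using this
      simpa using Subtype.ext this
    have hfin : finrank F W = finrank F (Module.Dual F H) := by
      have h1 := Subspace.finrank_add_finrank_dualCoannihilator_eq W
      rw [hco, finrank_bot, add_zero] at h1
      rw [h1, Subspace.dual_finrank_eq]
    exact Submodule.eq_top_of_finrank_eq hfin
  -- extract a basis B ⊆ range f of the dual
  obtain ⟨B, hBsub, hBspan, hBli⟩ := exists_linearIndependent F (Set.range f)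
  rw [hspan] at hBspan
  have hBfin : B.Finite := hBli.setFinite
  haveI : Fintype B := hBfin.fintype
  -- choose preimage indices
  choose p hp using fun g : B => hBsub g.2
  -- the evaluation map H → (B → F)
  set ψ : H →ₗ[F] (B → F) := LinearMap.pi (fun g : B => (g : Module.Dual F H)) with hψ
  have hψinj : Function.Injective ψ := by
    rw [← LinearMap.ker_eq_bot, eq_bot_iff]
    intro c hc
    rw [LinearMap.mem_ker] at hc
    have hall : ∀ φ : Module.Dual F H, φ c = 0 := by
      intro φ
      have hφ : φ ∈ Submodule.span F B := by rw [hBspan]; trivial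
      induction hφ using Submodule.span_induction with
      | mem g hg => exact congrFun hc ⟨g, hg⟩
      | zero => simp
      | add g₁ g₂ _ _ h1 h2 => simp [h1, h2]
      | smul a g _ h => simp [h]
    simpa using (Module.forall_dual_apply_eq_zero_iff F (c : H)).mp hall
  have hψsurj : Function.Surjective ψ := by
    rw [← LinearMap.range_eq_top]
    apply Submodule.eq_top_of_finrank_eq
    rw [LinearMap.finrank_range_of_inj hψinj]
    have hcard : finrank F (B → F) = Fintype.card B := by
      simp [finrank_fintype_fun_eq_card]
    rw [hcard, ← Set.toFinset_card, ← finrank_span_set_eq_card hBli, hBspan, finrank_top,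
      Subspace.dual_finrank_eq]
  set e : H ≃ₗ[F] (B → F) := LinearEquiv.ofBijective ψ ⟨hψinj, hψsurj⟩ with he
  -- the candidate elements
  set w : Fin m → (Fin s → F) → (B → F) := fun i v g =>
    if (p g).1 = i then v (p g).2 else 0 with hw
  set A : Fin m → Finset (Fin n → Fin s → F) := fun i =>
    (L i).image (fun v => ((e.symm (w i v) : H) : Fin n → Fin s → F)) with hA
  refine ⟨A, ?_, ?_, ?_⟩
  · intro i x hx
    simp only [hA, Finset.coe_image, Set.mem_image] at hx
    obtain ⟨v, _, rfl⟩ := hx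
    exact (e.symm (w i v)).2
  · intro i
    calc (A i).card ≤ (L i).card := Finset.card_image_le
      _ = ℓ := hL i
  · intro c hc hcL
    set cH : H := ⟨c, hc⟩ with hcH
    refine ⟨fun i => ((e.symm (w i (c (t i))) : H) : Fin n → Fin s → F), ?_, ?_⟩
    · intro i
      exact Finset.mem_image_of_mem _ (hcL i)
    · have key : cH = ∑ i, e.symm (w i (c (t i))) := by
        apply e.injective
        have hmap : e (∑ i, e.symm (w i (c (t i))))
            = ∑ i, e.toLinearMap (e.symm (w i (c (t i)))) :=
          map_sum e.toLinearMap _ _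
        rw [show (e (∑ i, e.symm (w i (c (t i))))) = _ from hmap]
        funext g
        have hg : ∀ i, e.toLinearMap (e.symm (w i (c (t i)))) = w i (c (t i)) := fun i =>
          e.apply_symm_apply _
        have hsum : (∑ i, e.toLinearMap (e.symm (w i (c (t i))))) g
            = ∑ i, w i (c (t i)) g := by
          rw [Finset.sum_congr rfl (fun i _ => hg i)]
          simp [Finset.sum_apply]
        rw [hsum]
        have heval : e cH g = c (t (p g).1) (p g).2 := by
          have h1 : e cH g = (g : Module.Dual F H) cH := rfl
          rw [h1, ← hp g, hfapply]
        rw [heval]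
        simp only [hw]
        rw [Finset.sum_ite_eq Finset.univ (p g).1 (fun i => c (t i) (p g).2)]
        simp
      exact (congrArg Subtype.val key).trans (Submodule.coe_sum _ _ _)
end

section
/- Let V be a d-dimensional vector space over F_q, and for i ∈ [m] let s_i ≥ 0 and π_i: V → V_i be linear maps such that for every subspace U ⊆ V, dim(U) ≤ Σ_{i=1}^m s_i·dim(π_i(U)). Then for every probability distribution X on V, the Shannon entropies satisfy H(X) ≤ Σ_{i=1}^m s_i·H(π_i(X)). -/
/-!
Work with the entropy `Ĥ f = Σ f log (Σ f / f)` of unnormalised mass functions, which is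
homogeneous, superadditive, and satisfies an exact chain rule along any map. The proof is by
induction on `dim V`.

If some subspace `0 ≠ U ≠ V` is critical (equality in the hypothesis), the hypothesis holds for the
restrictions `πᵢ|_U` and, by criticality, for the maps `V/U → Wᵢ/πᵢ(U)`. The chain rule along the
cosets of `U`, together with "conditioning reduces entropy" in each `Wᵢ`, glues the two
inequalities.

Otherwise, note that the inequality is linear in `s` and that the admissible `s` form a polytope.
Move `s` along a direction that keeps the constraint for `V` fixed. The boundary is reached either
where a coordinate vanishes (then induct on the support of `s`) or where a critical subspace
appears. So only exponents with one nonzero coordinate `sⱼ` remain, and for those the hypothesis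
forces `πⱼ` to be injective and `sⱼ ≥ 1`.
-/

open Module

/-- The Shannon entropy (in nats) of a probability mass function on a finite type. -/
noncomputable def shannonEntropy {α : Type*} [Fintype α] (X : α → ℝ) : ℝ :=
  ∑ a : α, Real.negMulLog (X a)

open Finset Function

lemma sum_indicator_preimage {α β γ : Type*} [Fintype β] [DecidableEq γ] (p : α → β)
    (k : β → γ) (f : α → ℝ) (d : γ) :
    ∑ b ∈ univ.filter (fun b => k b = d), (p ⁻¹' {b}).indicator f =
      ((k ∘ p) ⁻¹' {d}).indicator f := by
  ext a
  rw [Finset.sum_apply]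
  by_cases h : k (p a) = d
  · rw [sum_eq_single_of_mem (p a) (by simpa using h) fun b _ hb =>
      Set.indicator_of_notMem (by simpa using Ne.symm hb) f]
    simp [h]
  · rw [sum_eq_zero fun b hb => Set.indicator_of_notMem (by
      rintro rfl; exact h (by simpa using hb)) f]
    simp [h]

section Entropy

open Real

variable {α β γ : Type*} [Fintype α]

/-- The entropy of a mass function, extended from probability vectors so as to be homogeneous of
degree one. -/
noncomputable def unnormalizedEntropy (f : α → ℝ) : ℝ :=
  shannonEntropy f - negMulLog (∑ a, f a)

lemma unnormalizedEntropy_eq_shannonEntropy {f : α → ℝ} (hf : ∑ a, f a = 1) :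
    unnormalizedEntropy f = shannonEntropy f := by
  simp [unnormalizedEntropy, hf]

lemma unnormalizedEntropy_eq_sum (f : α → ℝ) :
    unnormalizedEntropy f = ∑ a, f a * (log (∑ b, f b) - log (f a)) := by
  simp only [unnormalizedEntropy, shannonEntropy, negMulLog, neg_mul, sum_neg_distrib, mul_sub,
    sum_sub_distrib, ← sum_mul]
  ring

lemma unnormalizedEntropy_nonneg {f : α → ℝ} (hf : 0 ≤ f) : 0 ≤ unnormalizedEntropy f := by
  rw [unnormalizedEntropy_eq_sum]
  refine sum_nonneg fun a _ => ?_
  rcases (hf a).eq_or_lt with h | h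
  · simp [← h]
  · exact mul_nonneg h.le <| sub_nonneg.2 <|
      log_le_log h <| single_le_sum (fun b _ => hf b) (mem_univ a)

lemma unnormalizedEntropy_of_subsingleton [Subsingleton α] (f : α → ℝ) :
    unnormalizedEntropy f = 0 := by
  cases isEmpty_or_nonempty α with
  | inl _ => simp [unnormalizedEntropy, shannonEntropy]
  | inr h => simp [unnormalizedEntropy, shannonEntropy, Fintype.sum_subsingleton _ h.some]

/-- Gibbs' inequality. -/
lemma unnormalizedEntropy_le_sum_mul_log_sub {f r : α → ℝ} (hf : 0 ≤ f) (hr : 0 ≤ r)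
    (hfr : ∀ a, 0 < f a → 0 < r a) :
    unnormalizedEntropy f ≤ ∑ a, f a * (log (∑ b, r b) - log (r a)) := by
  set S := ∑ b, f b
  set R := ∑ b, r b
  have hS0 : 0 ≤ S := sum_nonneg fun b _ => hf b
  rcases hS0.eq_or_lt with hS | hS
  · have hf0 : ∀ a, f a = 0 := fun a =>
      (sum_eq_zero_iff_of_nonneg fun b _ => hf b).1 hS.symm a (mem_univ a)
    simp [unnormalizedEntropy_eq_sum, hf0]
  obtain ⟨a₀, -, ha₀⟩ : ∃ a ∈ univ, 0 < f a := by
    by_contra! h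
    exact hS.not_ge (sum_nonpos h)
  have hR : 0 < R := (hfr a₀ ha₀).trans_le (single_le_sum (fun b _ => hr b) (mem_univ a₀))
  -- termwise `log x ≤ x - 1` at `x = S r a / (R f a)`; the bounds sum to `S - S = 0`
  have key : ∀ a,
      f a * (log S - log (f a)) - f a * (log R - log (r a)) ≤ S * r a / R - f a := by
    intro a
    rcases (show 0 ≤ f a from hf a).eq_or_lt with h | h
    · rw [← h, zero_mul, zero_mul, sub_zero, sub_zero]
      exact div_nonneg (mul_nonneg hS0 (hr a)) hR.le
    have hra := hfr a h
    have hlog : f a * (log S - log (f a)) - f a * (log R - log (r a)) =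
        f a * log (S * r a / (R * f a)) := by
      rw [log_div (by positivity) (by positivity), log_mul hS.ne' hra.ne', log_mul hR.ne' h.ne']
      ring
    have hlin : f a * (S * r a / (R * f a) - 1) = S * r a / R - f a := by field_simp
    rw [hlog, ← hlin]
    exact mul_le_mul_of_nonneg_left (log_le_sub_one_of_pos (by positivity)) h.le
  have hsum : ∑ a, (S * r a / R - f a) = 0 := by
    rw [sum_sub_distrib, ← sum_div, ← mul_sum, mul_div_assoc, div_self hR.ne', mul_one, sub_self]
  rw [unnormalizedEntropy_eq_sum, ← sub_nonpos, ← sum_sub_distrib, ← hsum]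
  exact sum_le_sum fun a _ => key a

lemma sum_unnormalizedEntropy_le (t : Finset β) (f : β → α → ℝ) (hf : ∀ b, 0 ≤ f b) :
    ∑ b ∈ t, unnormalizedEntropy (f b) ≤ unnormalizedEntropy (∑ b ∈ t, f b) := by
  set r := ∑ b ∈ t, f b
  have hr : 0 ≤ r := sum_nonneg fun b _ => hf b
  calc ∑ b ∈ t, unnormalizedEntropy (f b)
      ≤ ∑ b ∈ t, ∑ a, f b a * (log (∑ c, r c) - log (r a)) := by
        refine sum_le_sum fun b hb =>
          unnormalizedEntropy_le_sum_mul_log_sub (hf b) hr fun a ha => ha.trans_le ?_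
        simpa [r, Finset.sum_apply] using single_le_sum (fun c _ => hf c a) hb
    _ = unnormalizedEntropy r := by
        rw [sum_comm, unnormalizedEntropy_eq_sum]
        simp [r, Finset.sum_apply, sum_mul]

variable [DecidableEq β] [DecidableEq γ]

noncomputable def pushforward (g : α → β) (f : α → ℝ) (b : β) : ℝ :=
  ∑ a ∈ univ.filter (fun a => g a = b), f a

lemma sum_pushforward [Fintype β] (g : α → β) (f : α → ℝ) :
    ∑ b, pushforward g f b = ∑ a, f a :=
  sum_fiberwise _ _ _

lemma pushforward_nonneg (g : α → β) {f : α → ℝ} (hf : 0 ≤ f) : 0 ≤ pushforward g f :=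
  fun _ => sum_nonneg fun a _ => hf a

lemma pushforward_apply_eq_sum_indicator (g : α → β) (f : α → ℝ) (b : β) :
    pushforward g f b = ∑ a, (g ⁻¹' {b}).indicator f a := by
  rw [pushforward, sum_filter]
  exact sum_congr rfl fun a _ => by by_cases h : g a = b <;> simp [h]

lemma pushforward_comp [Fintype β] (g : α → β) (h : β → γ) (f : α → ℝ) :
    pushforward (h ∘ g) f = pushforward h (pushforward g f) := by
  ext c
  rw [pushforward, ← sum_fiberwise _ g, pushforward, sum_filter]
  refine sum_congr rfl fun b _ => ?_
  split_ifs with hb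
  · exact sum_congr (by ext a; simp +contextual [hb]) fun _ _ => rfl
  · refine sum_eq_zero fun a ha => ?_
    simp only [mem_filter, mem_univ, true_and] at ha
    exact absurd (ha.2 ▸ ha.1) hb

lemma pushforward_sum {κ : Type*} (t : Finset κ) (g : α → β) (f : κ → α → ℝ) :
    pushforward g (∑ k ∈ t, f k) = ∑ k ∈ t, pushforward g (f k) := by
  ext b
  simp only [pushforward, Finset.sum_apply]
  exact sum_comm

lemma pushforward_comp_of_injective {g : α → β} (hg : Injective g) {f : β → ℝ}
    (hf : ∀ b, f b ≠ 0 → b ∈ Set.range g) : pushforward g (f ∘ g) = f := by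
  ext b
  by_cases hb : b ∈ Set.range g
  · obtain ⟨a, rfl⟩ := hb
    rw [pushforward, sum_eq_single_of_mem a (by simp) fun a' ha' hne =>
      absurd (hg (by simpa using ha')) hne]
    rfl
  · rw [pushforward, sum_eq_zero fun a ha => absurd ⟨a, by simpa using ha⟩ hb]
    exact (not_imp_comm.1 (hf b) hb).symm

lemma unnormalizedEntropy_pushforward_of_injective [Fintype β] {g : α → β} (hg : Injective g)
    (f : α → ℝ) : unnormalizedEntropy (pushforward g f) = unnormalizedEntropy f := by
  have hfiber : ∀ b, negMulLog (pushforward g f b) =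
      ∑ a ∈ univ.filter (fun a => g a = b), negMulLog (f a) := by
    intro b
    rcases (univ.filter fun a => g a = b).eq_empty_or_nonempty with h | ⟨a, ha⟩
    · simp [pushforward, h]
    · have : univ.filter (fun a => g a = b) = {a} :=
        eq_singleton_iff_unique_mem.2 ⟨ha, fun a' ha' => hg (by simp_all)⟩
      simp [pushforward, this]
  simp only [unnormalizedEntropy, shannonEntropy, hfiber, sum_pushforward, sum_fiberwise]

lemma unnormalizedEntropy_eq_pushforward_add [Fintype β] (p : α → β) (f : α → ℝ) :
    unnormalizedEntropy f = unnormalizedEntropy (pushforward p f) +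
      ∑ b, unnormalizedEntropy ((p ⁻¹' {b}).indicator f) := by
  have hfiber : ∀ a, ∑ b, negMulLog ((p ⁻¹' {b}).indicator f a) = negMulLog (f a) := by
    intro a
    rw [sum_eq_single (p a) (fun b _ hb => by
      simp [Set.indicator_of_notMem (by simpa using hb.symm : a ∉ p ⁻¹' {b})]) (by simp)]
    simp
  simp only [unnormalizedEntropy, shannonEntropy, sum_sub_distrib,
    ← pushforward_apply_eq_sum_indicator, sum_pushforward]
  rw [sum_comm, sum_congr rfl fun a _ => hfiber a]
  ring

lemma indicator_preimage_pushforward (g : α → β) (r : β → γ) (f : α → ℝ) (d : γ) :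
    (r ⁻¹' {d}).indicator (pushforward g f) =
      pushforward g (((r ∘ g) ⁻¹' {d}).indicator f) := by
  classical
  ext c
  simp only [pushforward, Set.indicator_apply, Set.mem_preimage, Set.mem_singleton_iff,
    comp_apply]
  split_ifs with hc
  · exact sum_congr rfl fun a ha => by rw [(mem_filter.1 ha).2, if_pos hc]
  · exact (sum_eq_zero fun a ha => by rw [(mem_filter.1 ha).2, if_neg hc]).symm

/-- Conditioning reduces entropy; `hrg` says that `p` refines `r ∘ g`. -/
lemma unnormalizedEntropy_pushforward_add_sum_le {κ : Type*} [Fintype κ] [Fintype β]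
    [Fintype γ] {f : α → ℝ} (hf : 0 ≤ f) (p : α → κ) (g : α → β) (r : β → γ) (k : κ → γ)
    (hrg : r ∘ g = k ∘ p) :
    unnormalizedEntropy (pushforward r (pushforward g f)) +
        ∑ b, unnormalizedEntropy (pushforward g ((p ⁻¹' {b}).indicator f)) ≤
      unnormalizedEntropy (pushforward g f) := by
  rw [unnormalizedEntropy_eq_pushforward_add r (pushforward g f), ← sum_fiberwise univ k]
  gcongr with d
  rw [indicator_preimage_pushforward, hrg, ← sum_indicator_preimage, pushforward_sum]
  exact sum_unnormalizedEntropy_le _ _ fun b =>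
    pushforward_nonneg g (Set.indicator_nonneg (fun a _ => hf a))

end Entropy

lemma exists_step_to_boundary {κ : Type*} [Finite κ] (a b : κ → ℝ) (ha : 0 ≤ a)
    (hb : ∃ k, b k < 0) : ∃ t, 0 ≤ t ∧ 0 ≤ a + t • b ∧ ∃ k, b k < 0 ∧ a k + t * b k = 0 := by
  obtain ⟨k₀, hk₀, hmin⟩ :=
    Set.exists_min_image {k | b k < 0} (fun k => a k / -b k) (Set.toFinite _) hb
  have hk₀' : 0 < -b k₀ := neg_pos.2 hk₀
  refine ⟨a k₀ / -b k₀, div_nonneg (ha k₀) hk₀'.le, fun k => ?_, k₀, hk₀, ?_⟩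
  · rcases le_or_gt 0 (b k) with hbk | hbk
    · exact add_nonneg (ha k) (mul_nonneg (div_nonneg (ha k₀) hk₀'.le) hbk)
    · have := hmin k hbk
      rw [le_div_iff₀ (neg_pos.2 hbk)] at this
      simp only [Pi.add_apply, Pi.smul_apply, smul_eq_mul, Pi.zero_apply]
      linarith
  · have hb0 : b k₀ ≠ 0 := neg_ne_zero.1 hk₀'.ne'
    field_simp
    ring

section BrascampLieb

variable {F V ι : Type*} [Field F] [AddCommGroup V] [Module F V] [Fintype ι]
  {W : ι → Type*} [∀ i, AddCommGroup (W i)] [∀ i, Module F (W i)]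

noncomputable def blRank (π : ∀ i, V →ₗ[F] W i) (s : ι → ℝ) (U : Submodule F V) : ℝ :=
  ∑ i, s i * finrank F (U.map (π i))

def BLAdmissible (π : ∀ i, V →ₗ[F] W i) (s : ι → ℝ) : Prop :=
  0 ≤ s ∧ ∀ U : Submodule F V, (finrank F U : ℝ) ≤ blRank π s U

open Classical in
def EntropyBL [Fintype V] [∀ i, Fintype (W i)] (π : ∀ i, V →ₗ[F] W i) (s : ι → ℝ) : Prop :=
  ∀ f : V → ℝ, 0 ≤ f →
    unnormalizedEntropy f ≤ ∑ i, s i * unnormalizedEntropy (pushforward (π i) f)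

variable {π : ∀ i, V →ₗ[F] W i} {s : ι → ℝ}

lemma blRank_add_smul (π : ∀ i, V →ₗ[F] W i) (s w : ι → ℝ) (t : ℝ) (U : Submodule F V) :
    blRank π (s + t • w) U = blRank π s U + t * blRank π w U := by
  simp only [blRank, Pi.add_apply, Pi.smul_apply, smul_eq_mul, add_mul, sum_add_distrib,
    mul_sum, mul_assoc]

lemma blRank_bot (π : ∀ i, V →ₗ[F] W i) (s : ι → ℝ) : blRank π s ⊥ = 0 :=
  sum_eq_zero fun i _ => by simp

lemma BLAdmissible.restrict (h : BLAdmissible π s) (U : Submodule F V) :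
    BLAdmissible (fun i => (π i).comp U.subtype) s := by
  refine ⟨h.1, fun U' => ?_⟩
  have := h.2 (U'.map U.subtype)
  rw [Submodule.finrank_map_subtype_eq] at this
  exact this.trans_eq (sum_congr rfl fun i _ => by rw [Submodule.map_comp])

lemma finrank_map_mkQ_add {M : Type*} [AddCommGroup M] [Module F M] [FiniteDimensional F M]
    {U U' : Submodule F M} (h : U ≤ U') :
    finrank F (U'.map U.mkQ) + finrank F U = finrank F U' := by
  have := LinearMap.finrank_range_add_finrank_ker (U.mkQ.comp U'.subtype)
  rwa [LinearMap.range_comp, Submodule.range_subtype, LinearMap.ker_comp, Submodule.ker_mkQ,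
    (Submodule.comapSubtypeEquivOfLe h).finrank_eq] at this

lemma BLAdmissible.quotient [FiniteDimensional F V] [∀ i, FiniteDimensional F (W i)]
    (h : BLAdmissible π s) {U : Submodule F V} (hU : (finrank F U : ℝ) = blRank π s U) :
    BLAdmissible (fun i => U.mapQ (U.map (π i)) (π i) (Submodule.le_comap_map (π i) U)) s := by
  refine ⟨h.1, fun Ub => ?_⟩
  set πq := fun i => U.mapQ (U.map (π i)) (π i) (Submodule.le_comap_map (π i) U)
  set U' := Ub.comap U.mkQ
  have hle : U ≤ U' := fun x hx => by simp [U', (Submodule.Quotient.mk_eq_zero U).2 hx]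
  have hmap : U'.map U.mkQ = Ub := Submodule.map_comap_eq_of_surjective U.mkQ_surjective Ub
  have hdim : finrank F Ub + finrank F U = finrank F U' := hmap ▸ finrank_map_mkQ_add hle
  have hdimi : ∀ i, finrank F (Ub.map (πq i)) + finrank F (U.map (π i)) =
      finrank F (U'.map (π i)) := by
    intro i
    rw [← hmap, ← Submodule.map_comp, Submodule.mapQ_mkQ, Submodule.map_comp]
    exact finrank_map_mkQ_add (Submodule.map_mono hle)
  have hrank : blRank π s U' = blRank πq s Ub + blRank π s U := by
    simp only [blRank, ← sum_add_distrib, ← mul_add, ← hdimi, Nat.cast_add]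
  have := h.2 U'
  rw [hrank, ← hU, ← hdim, Nat.cast_add] at this
  linarith

/-- Walking from `s` along `w` until the first of the inequalities `0 ≤ sᵢ`,
`dim U ≤ blRank π s U` becomes tight. -/
lemma BLAdmissible.exists_step [Finite V] (h : BLAdmissible π s) {w : ι → ℝ}
    (hw : ∃ i, w i < 0) :
    ∃ t, 0 ≤ t ∧ BLAdmissible π (s + t • w) ∧
      ((∃ i, w i < 0 ∧ s i + t * w i = 0) ∨
        ∃ U, blRank π w U < 0 ∧ (finrank F U : ℝ) = blRank π (s + t • w) U) := by
  obtain ⟨t, ht, hnn, k, hk, hk0⟩ := exists_step_to_boundary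
    (Sum.elim s fun U => blRank π s U - finrank F U) (Sum.elim w (blRank π w))
    (by rintro (i | U); exacts [h.1 i, sub_nonneg.2 (h.2 U)])
    (by obtain ⟨i, hi⟩ := hw; exact ⟨.inl i, hi⟩)
  refine ⟨t, ht, ⟨fun i => by simpa using hnn (.inl i), fun U => ?_⟩, ?_⟩
  · have := hnn (.inr U)
    simp only [Pi.add_apply, Sum.elim_inr, Pi.smul_apply, smul_eq_mul, Pi.zero_apply] at this
    rw [blRank_add_smul]
    linarith
  · rcases k with i | U
    · exact .inl ⟨i, hk, hk0⟩
    · refine .inr ⟨U, hk, ?_⟩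
      simp only [Sum.elim_inr] at hk0
      rw [blRank_add_smul]
      linarith

section Entropic

variable [Fintype V] [∀ i, Fintype (W i)]

lemma EntropyBL.mono (h : EntropyBL π s) {s' : ι → ℝ} (hss' : s ≤ s') : EntropyBL π s' := by
  classical
  exact fun f hf => (h f hf).trans <| sum_le_sum fun i _ =>
    mul_le_mul_of_nonneg_right (hss' i) (unnormalizedEntropy_nonneg (pushforward_nonneg _ hf))

lemma convex_setOf_entropyBL : Convex ℝ {s | EntropyBL π s} := by
  classical
  intro s hs s' hs' a b ha hb hab f hf
  calc unnormalizedEntropy f = a * unnormalizedEntropy f + b * unnormalizedEntropy f := by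
        rw [← add_mul, hab, one_mul]
    _ ≤ a * ∑ i, s i * unnormalizedEntropy (pushforward (π i) f) +
        b * ∑ i, s' i * unnormalizedEntropy (pushforward (π i) f) := by
        gcongr
        exacts [hs f hf, hs' f hf]
    _ = _ := by
        simp only [mul_sum, ← sum_add_distrib, Pi.add_apply, Pi.smul_apply, smul_eq_mul,
          add_mul, mul_assoc]

lemma EntropyBL.of_add_smul_of_add_smul_neg {w : ι → ℝ} {t₁ t₂ : ℝ} (ht₁ : 0 ≤ t₁)
    (ht₂ : 0 ≤ t₂) (h₁ : EntropyBL π (s + t₁ • w)) (h₂ : EntropyBL π (s + t₂ • -w)) :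
    EntropyBL π s := by
  rcases ht₁.eq_or_lt with rfl | ht₁
  · simpa using h₁
  have hsum : 0 < t₁ + t₂ := by linarith
  have hcomb : s = (t₂ / (t₁ + t₂)) • (s + t₁ • w) + (t₁ / (t₁ + t₂)) • (s + t₂ • -w) := by
    ext i
    simp only [Pi.add_apply, Pi.smul_apply, smul_eq_mul, Pi.neg_apply]
    field_simp
    ring
  rw [hcomb]
  exact convex_setOf_entropyBL h₁ h₂ (div_nonneg ht₂ hsum.le) (div_nonneg ht₁.le hsum.le)
    (by rw [← add_div, add_comm, div_self hsum.ne'])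

lemma EntropyBL.of_subsingleton_support (h : BLAdmissible π s)
    (hsupp : {i | s i ≠ 0}.Subsingleton) : EntropyBL π s := by
  classical
  intro f hf
  have hrhs : 0 ≤ ∑ i, s i * unnormalizedEntropy (pushforward (π i) f) := sum_nonneg fun i _ =>
    mul_nonneg (h.1 i) (unnormalizedEntropy_nonneg (pushforward_nonneg _ hf))
  cases subsingleton_or_nontrivial V with
  | inl _ => rwa [unnormalizedEntropy_of_subsingleton]
  | inr _ =>
  obtain ⟨j, hj⟩ : ∃ j, s j ≠ 0 := by
    by_contra! h0
    have := h.2 ⊤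
    simp [blRank, h0, Module.finrank_pos.ne'] at this
  have hsj : ∀ i, i ≠ j → s i = 0 := fun i hi => by_contra fun h' => hi (hsupp h' hj)
  have hrank : ∀ U, blRank π s U = s j * finrank F (U.map (π j)) := fun U =>
    sum_eq_single j (fun i _ hi => by simp [hsj i hi]) (by simp)
  have hinj : Injective (π j) := by
    have := h.2 (LinearMap.ker (π j))
    rw [hrank, LinearMap.le_ker_iff_map.1 le_rfl, finrank_bot, Nat.cast_zero, mul_zero] at this
    exact LinearMap.ker_eq_bot.1 <| Submodule.finrank_eq_zero.1 <|
      by exact_mod_cast this.antisymm (Nat.cast_nonneg _)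
  have hs1 : 1 ≤ s j := by
    have := h.2 ⊤
    rw [hrank, Submodule.map_top, LinearMap.finrank_range_of_inj hinj, finrank_top] at this
    have hpos : (0 : ℝ) < finrank F V := by exact_mod_cast Module.finrank_pos
    nlinarith
  rw [sum_eq_single j (fun i _ hi => by simp [hsj i hi]) (by simp),
    unnormalizedEntropy_pushforward_of_injective hinj]
  nlinarith [unnormalizedEntropy_nonneg hf]

open Classical in
lemma EntropyBL.unnormalizedEntropy_le_of_coset {U : Submodule F V} [Fintype U]
    (hU : EntropyBL (fun i => (π i).comp U.subtype) s) (v₀ : V) {f : V → ℝ} (hf : 0 ≤ f)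
    (hsupp : ∀ v, f v ≠ 0 → v - v₀ ∈ U) :
    unnormalizedEntropy f ≤ ∑ i, s i * unnormalizedEntropy (pushforward (π i) f) := by
  set τ : U → V := fun u => v₀ + u
  have hτ : Injective τ := fun u u' h => Subtype.ext (add_left_cancel h)
  have hfτ : pushforward τ (f ∘ τ) = f :=
    pushforward_comp_of_injective hτ fun v hv => ⟨⟨v - v₀, hsupp v hv⟩, by simp [τ]⟩
  have hπ : ∀ i, pushforward (π i) f =
      pushforward (π i v₀ + ·) (pushforward ((π i).comp U.subtype) (f ∘ τ)) := by
    intro i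
    rw [← pushforward_comp, ← hfτ, ← pushforward_comp, hfτ]
    congr 1
    ext u
    simp [τ]
  calc unnormalizedEntropy f = unnormalizedEntropy (f ∘ τ) := by
        rw [← unnormalizedEntropy_pushforward_of_injective hτ, hfτ]
    _ ≤ ∑ i, s i * unnormalizedEntropy (pushforward ((π i).comp U.subtype) (f ∘ τ)) :=
        hU _ fun u => hf _
    _ = _ := by
        simp only [hπ, unnormalizedEntropy_pushforward_of_injective (add_right_injective _)]

lemma EntropyBL.of_restrict_of_quotient (U : Submodule F V) [Fintype U] [Fintype (V ⧸ U)]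
    [∀ i, Fintype (W i ⧸ U.map (π i))] (hs : 0 ≤ s)
    (hU : EntropyBL (fun i => (π i).comp U.subtype) s)
    (hQ : EntropyBL (fun i => U.mapQ (U.map (π i)) (π i) (Submodule.le_comap_map (π i) U)) s) :
    EntropyBL π s := by
  classical
  intro f hf
  set q := U.mkQ
  set πq := fun i => U.mapQ (U.map (π i)) (π i) (Submodule.le_comap_map (π i) U)
  set fib := fun c => (q ⁻¹' {c}).indicator f
  have hfib : ∀ c, unnormalizedEntropy (fib c) ≤
      ∑ i, s i * unnormalizedEntropy (pushforward (π i) (fib c)) := by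
    intro c
    obtain ⟨v₀, rfl⟩ := U.mkQ_surjective c
    refine hU.unnormalizedEntropy_le_of_coset v₀ (Set.indicator_nonneg (fun v _ => hf v))
      fun v hv => (Submodule.Quotient.eq U).1 ?_
    by_contra hne
    exact hv (Set.indicator_of_notMem (show v ∉ q ⁻¹' {q v₀} from hne) f)
  have hcond : ∀ i, unnormalizedEntropy (pushforward (πq i) (pushforward q f)) +
      ∑ c, unnormalizedEntropy (pushforward (π i) (fib c)) ≤
        unnormalizedEntropy (pushforward (π i) f) := by
    intro i
    have hcomm : (U.map (π i)).mkQ ∘ π i = πq i ∘ q := rfl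
    rw [← pushforward_comp, ← hcomm, pushforward_comp]
    exact unnormalizedEntropy_pushforward_add_sum_le hf q (π i) _ (πq i) hcomm
  calc unnormalizedEntropy f
      = unnormalizedEntropy (pushforward q f) + ∑ c, unnormalizedEntropy (fib c) :=
        unnormalizedEntropy_eq_pushforward_add q f
    _ ≤ ∑ i, s i * unnormalizedEntropy (pushforward (πq i) (pushforward q f)) +
          ∑ c, ∑ i, s i * unnormalizedEntropy (pushforward (π i) (fib c)) :=
        add_le_add (hQ _ (pushforward_nonneg q hf)) (sum_le_sum fun c _ => hfib c)
    _ = ∑ i, s i * (unnormalizedEntropy (pushforward (πq i) (pushforward q f)) +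
          ∑ c, unnormalizedEntropy (pushforward (π i) (fib c))) := by
        rw [sum_comm]
        simp only [mul_add, mul_sum, sum_add_distrib]
    _ ≤ ∑ i, s i * unnormalizedEntropy (pushforward (π i) f) :=
        sum_le_sum fun i _ => mul_le_mul_of_nonneg_left (hcond i) (hs i)

lemma EntropyBL.exists_add_smul
    (hcrit : ∀ s, BLAdmissible π s → ∀ U : Submodule F V, U ≠ ⊥ → U ≠ ⊤ →
      (finrank F U : ℝ) = blRank π s U → EntropyBL π s)
    (ih : ∀ s', BLAdmissible π s' → #{i | s' i ≠ 0} < #{i | s i ≠ 0} → EntropyBL π s')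
    (hs : BLAdmissible π s) (w : ι → ℝ) (hw : ∃ i, w i < 0) (hws : ∀ i, s i = 0 → w i = 0)
    (htop : blRank π w ⊤ = 0) :
    ∃ t : ℝ, 0 ≤ t ∧ EntropyBL π (s + t • w) := by
  obtain ⟨t, ht, hadm, ⟨i, hwi, hi0⟩ | ⟨U, hwU, hU⟩⟩ := hs.exists_step hw
  · refine ⟨t, ht, ih _ hadm (card_lt_card ((ssubset_iff_of_subset fun j hj => ?_).2
      ⟨i, ?_, ?_⟩))⟩
    · simp only [mem_filter, mem_univ, true_and, Pi.add_apply, Pi.smul_apply] at hj ⊢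
      exact fun h0 => hj (by simp [h0, hws j h0])
    · simpa using fun h0 => hwi.ne (hws i h0)
    · simpa using hi0
  · refine ⟨t, ht, hcrit _ hadm U ?_ ?_ hU⟩
    · rintro rfl
      simp [blRank_bot] at hwU
    · rintro rfl
      exact hwU.ne htop

lemma EntropyBL.of_admissible_of_critical
    (hcrit : ∀ s, BLAdmissible π s → ∀ U : Submodule F V, U ≠ ⊥ → U ≠ ⊤ →
      (finrank F U : ℝ) = blRank π s U → EntropyBL π s)
    (hs : BLAdmissible π s) : EntropyBL π s := by
  classical
  induction hn : #{i | s i ≠ 0} using Nat.strong_induction_on generalizing s with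
  | _ n ih =>
  have step := EntropyBL.exists_add_smul hcrit (fun s' hs' hlt => ih _ (hn ▸ hlt) hs' rfl) hs
  by_cases hsub : {i | s i ≠ 0}.Subsingleton
  · exact EntropyBL.of_subsingleton_support hs hsub
  obtain ⟨j, hj, k, hk, hjk⟩ := Set.not_subsingleton_iff.1 hsub
  set d : ι → ℝ := fun i => finrank F (LinearMap.range (π i))
  have hrank : ∀ i c, blRank π (Pi.single i c) ⊤ = c * d i := fun i c => by
    rw [blRank, sum_eq_single i (fun i' _ hi' => by simp [hi']) (by simp), Pi.single_eq_same,
      Submodule.map_top]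
  by_cases hzero : ∃ i, s i ≠ 0 ∧ d i = 0
  · obtain ⟨i, hi, hdi⟩ := hzero
    obtain ⟨t, ht, hst⟩ := step (Pi.single i (-1)) ⟨i, by simp⟩
      (fun i' hi' => by rw [Pi.single_apply, if_neg (by rintro rfl; exact hi hi')])
      (by rw [hrank, hdi, mul_zero])
    refine hst.mono fun i' => ?_
    simp only [Pi.add_apply, Pi.smul_apply, smul_eq_mul, Pi.single_apply]
    split_ifs <;> linarith
  have hdj : 0 < d j := (Nat.cast_nonneg _).lt_of_ne' fun h0 => hzero ⟨j, hj, h0⟩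
  have hdk : 0 < d k := (Nat.cast_nonneg _).lt_of_ne' fun h0 => hzero ⟨k, hk, h0⟩
  set w : ι → ℝ := Pi.single j (d k) - Pi.single k (d j)
  have hws : ∀ i, s i = 0 → w i = 0 := fun i hi => by
    simp only [w, Pi.sub_apply, Pi.single_apply]
    rw [if_neg (by rintro rfl; exact hj hi), if_neg (by rintro rfl; exact hk hi), sub_zero]
  have hwtop : blRank π w ⊤ = 0 := by
    rw [show w = Pi.single j (d k) + (-1 : ℝ) • Pi.single k (d j) by simp [w, sub_eq_add_neg],
      blRank_add_smul, hrank, hrank]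
    ring
  obtain ⟨t₁, ht₁, h₁⟩ := step w ⟨k, by simp [w, hjk, hdj]⟩ hws hwtop
  obtain ⟨t₂, ht₂, h₂⟩ := step (-w) ⟨j, by simp [w, hjk, hdk]⟩ (fun i hi => by simp [hws i hi])
    (by rw [← neg_one_smul ℝ w, ← zero_add ((-1 : ℝ) • w), blRank_add_smul, hwtop]; simp [blRank])
  exact EntropyBL.of_add_smul_of_add_smul_neg ht₁ ht₂ h₁ h₂

end Entropic

end BrascampLieb

theorem EntropyBL.of_admissible {F ι : Type*} [Field F] [Fintype ι] {V : Type*}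
    [AddCommGroup V] [Module F V] [Fintype V] {W : ι → Type*} [∀ i, AddCommGroup (W i)]
    [∀ i, Module F (W i)] [∀ i, Fintype (W i)] {π : ∀ i, V →ₗ[F] W i} {s : ι → ℝ}
    (hs : BLAdmissible π s) : EntropyBL π s := by
  induction hn : finrank F V using Nat.strong_induction_on generalizing V W s with
  | _ n ih =>
  refine EntropyBL.of_admissible_of_critical (fun s hs U hbot htop hU => ?_) hs
  have := Fintype.ofFinite U
  have := Fintype.ofFinite (V ⧸ U)
  have := fun i => Fintype.ofFinite (W i ⧸ U.map (π i))
  refine EntropyBL.of_restrict_of_quotient U hs.1 (ih _ ?_ (hs.restrict U) rfl)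
    (ih _ ?_ (hs.quotient hU) rfl)
  · rw [← hn]
    exact Submodule.finrank_lt htop
  · rw [← hn, ← U.finrank_quotient_add_finrank]
    have := Submodule.finrank_eq_zero.not.2 hbot
    omega

theorem stmt14_general {F : Type*} [Field F] {V : Type*} [AddCommGroup V] [Module F V]
    [Fintype V]
    {m : ℕ} {W : Fin m → Type*} [∀ i, AddCommGroup (W i)] [∀ i, Module F (W i)]
    [∀ i, Fintype (W i)] [∀ i, DecidableEq (W i)]
    (s : Fin m → ℝ) (hs : ∀ i, 0 ≤ s i)
    (π : ∀ i, V →ₗ[F] W i)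
    (hdim : ∀ U : Submodule F V,
      (finrank F ↥U : ℝ) ≤ ∑ i, s i * (finrank F ↥(U.map (π i)) : ℝ))
    (X : V → ℝ) (hX0 : ∀ v, 0 ≤ X v) (hX1 : ∑ v : V, X v = 1) :
    shannonEntropy X ≤
      ∑ i, s i *
        shannonEntropy (fun w : W i => ∑ v ∈ Finset.univ.filter (fun v => π i v = w), X v) := by
  have h := EntropyBL.of_admissible (π := π) ⟨hs, hdim⟩ X hX0
  rw [unnormalizedEntropy_eq_shannonEntropy hX1] at h
  convert h using 3 with i
  rw [unnormalizedEntropy_eq_shannonEntropy]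
  · unfold pushforward
    congr!
  · convert (sum_pushforward (π i) X).trans hX1

/-- Discrete Brascamp–Lieb inequality over finite fields: if `V` is a finite-dimensional vector
space over `F_q`, `sᵢ ≥ 0`, and `πᵢ : V → Vᵢ` are linear maps such that
`dim U ≤ Σᵢ sᵢ·dim(πᵢ(U))` for every subspace `U ⊆ V`, then for every probability distribution
`X` on `V`, `H(X) ≤ Σᵢ sᵢ·H(πᵢ(X))`. -/
theorem stmt14 {F : Type*} [Field F] [Fintype F] {V : Type*} [AddCommGroup V] [Module F V]
    [Fintype V] [DecidableEq V] [FiniteDimensional F V]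
    {m : ℕ} {W : Fin m → Type*} [∀ i, AddCommGroup (W i)] [∀ i, Module F (W i)]
    [∀ i, Fintype (W i)] [∀ i, DecidableEq (W i)]
    (s : Fin m → ℝ) (hs : ∀ i, 0 ≤ s i)
    (π : ∀ i, V →ₗ[F] W i)
    (hdim : ∀ U : Submodule F V,
      (finrank F ↥U : ℝ) ≤ ∑ i, s i * (finrank F ↥(U.map (π i)) : ℝ))
    (X : V → ℝ) (hX0 : ∀ v, 0 ≤ X v) (hX1 : ∑ v : V, X v = 1) :
    shannonEntropy X ≤
      ∑ i, s i *
        shannonEntropy (fun w : W i => ∑ v ∈ Finset.univ.filter (fun v => π i v = w), X v) :=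
  stmt14_general s hs π hdim X hX0 hX1
end

section
/- Let L ≥ 1, ℓ ≥ 1, ρ ∈ (0,1], and τ, ε ≥ 0 with ρ ≥ τ + ε > τ and ε > 0, and suppose (ρ − τ)·log L ≤ ρ·log(ℓ/ρ). Then L ≤ (ℓ/(τ+ε))^{(τ+ε)/ε}. -/
/-- The final calculus step in the Brascamp–Lieb list-size bound: if `L, ℓ ≥ 1`,
`ρ ∈ (0, 1]`, `τ ≥ 0`, `ε > 0`, `ρ ≥ τ + ε`, and `(ρ − τ)·log L ≤ ρ·log(ℓ/ρ)`, then
`L ≤ (ℓ/(τ+ε))^{(τ+ε)/ε}`. -/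
theorem stmt18 (L ℓ ρ τ ε : ℝ) (hL : 1 ≤ L) (hℓ : 1 ≤ ℓ)
    (hρ0 : 0 < ρ) (hρ1 : ρ ≤ 1) (hτ : 0 ≤ τ) (hε : 0 < ε) (hρ : τ + ε ≤ ρ)
    (h : (ρ - τ) * Real.log L ≤ ρ * Real.log (ℓ / ρ)) :
    L ≤ (ℓ / (τ + ε)) ^ ((τ + ε) / ε) := by
  set s := τ + ε with hs
  have hs0 : 0 < s := by positivity
  have hρτ : 0 < ρ - τ := by linarith
  have hℓρ1 : 1 ≤ ℓ / ρ := (le_div_iff₀ hρ0).2 (by linarith)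
  have hρs1 : 1 ≤ ρ / s := (le_div_iff₀ hs0).2 (by linarith)
  have hlog1 : 0 ≤ Real.log (ℓ / ρ) := Real.log_nonneg hℓρ1
  have hlog2 : 0 ≤ Real.log (ρ / s) := Real.log_nonneg hρs1
  have hsplit : Real.log (ℓ / s) = Real.log (ℓ / ρ) + Real.log (ρ / s) := by
    rw [← Real.log_mul (by positivity) (by positivity)]
    congr 1
    field_simp
  have key : ε * (ρ * Real.log (ℓ / ρ)) ≤ (ρ - τ) * (s * Real.log (ℓ / s)) := by
    rw [hsplit]
    nlinarith [mul_nonneg hτ (mul_nonneg (sub_nonneg.2 hρ) hlog1),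
      mul_nonneg hs0.le (mul_nonneg hρτ.le hlog2)]
  have hlogL : Real.log L ≤ s / ε * Real.log (ℓ / s) := by
    rw [div_mul_eq_mul_div, le_div_iff₀ hε]
    have h1 : ε * ((ρ - τ) * Real.log L) ≤ ε * (ρ * Real.log (ℓ / ρ)) :=
      mul_le_mul_of_nonneg_left h hε.le
    have := h1.trans key
    nlinarith
  have hrpow : (ℓ / s) ^ (s / ε) = Real.exp (s / ε * Real.log (ℓ / s)) := by
    rw [Real.rpow_def_of_pos (by positivity)]
    ring_nf
  calc L = Real.exp (Real.log L) := (Real.exp_log (by linarith)).symm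
    _ ≤ Real.exp (s / ε * Real.log (ℓ / s)) := Real.exp_le_exp.2 hlogL
    _ = (ℓ / s) ^ (s / ε) := hrpow.symm
end
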